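/- A matrix A ∈ M(n,R) satisfies dim_k(R^n / R^n A) = 0 if and only if A is invertible in M(n,R); that is, the kernel of the map f(A) = dim_k(R^n / R^n A), viewed as a monoid homomorphism (M(n,R), ·) → (ℕ ∪ {∞}, +), is exactly GL(n,R). -/

import Mathlib

/-!
Left division works in `R`: the leading coefficient of `x ^ s * g` is `α^[s]` of that of `g`,
which is nonzero because `α` is injective, so any `f` can be reduced by multiples `q * g` until
its coefficients vanish from degree `deg g` on. Hence every left ideal is generated by a nonzero
element of least degree, and `R` is a left principal ideal ring, in particular left Noetherian and
therefore stably finite. On the other hand `dim_k (Rⁿ / Rⁿ A) = 0` says that `v ↦ v A` is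
surjective, i.e. `A` has a left inverse, and over a stably finite ring that is already an inverse.
-/

/-- `R`, together with the embedding `ι : k →+* R` and the element `x : R`, is a
left skew polynomial ring `k[x; α, δ]`: `δ` is an `α`-derivation, the commutation
rule `x * a = α a * x + δ a` holds, and every element of `R` is uniquely a
polynomial `a₀ + a₁ x + ⋯ + aₘ xᵐ` with coefficients in `k`. -/
structure IsSkewPolynomialRing (k R : Type*) [Field k] [Ring R]
    (α : k →+* k) (δ : k → k) (ι : k →+* R) (x : R) : Prop where
  delta_add : ∀ a b : k, δ (a + b) = δ a + δ b
  delta_mul : ∀ a b : k, δ (a * b) = δ a * α b + a * δ b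
  commute_x : ∀ a : k, x * ι a = ι (α a) * x + ι (δ a)
  repr_bijective : Function.Bijective fun p : ℕ →₀ k => p.sum fun i a => ι a * x ^ i

/-- The degree of a (nonzero) element of the skew polynomial ring, read off from its
unique representation as a polynomial in `x`. (Junk value `0` at `r = 0`.) -/
noncomputable def skewDeg {k R : Type*} [Field k] [Ring R] {α : k →+* k} {δ : k → k}
    {ι : k →+* R} {x : R} (h : IsSkewPolynomialRing k R α δ ι x) (r : R) : ℕ :=
  WithBot.unbotD 0 (((Equiv.ofBijective _ h.repr_bijective).symm r).support.max)

/-- `dim_k (Rⁿ / Rⁿ A) ∈ ℕ ∪ {∞}`: the `k`-dimension of the quotient of the space of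
row vectors `Rⁿ` by the left `R`-submodule `Rⁿ A` spanned by the rows of `A`. -/
noncomputable def quotDim (k : Type*) {R : Type*} [Field k] [Ring R] (ι : k →+* R)
    {n : ℕ} (A : Matrix (Fin n) (Fin n) R) : ℕ∞ :=
  letI : Module k ((Fin n → R) ⧸ Submodule.span R (Set.range fun i => A i)) :=
    Module.compHom _ ι
  Cardinal.toENat
    (Module.rank k ((Fin n → R) ⧸ Submodule.span R (Set.range fun i => A i)))

namespace Matrix

theorem vecMul_surjective_iff_isUnit_of_isStablyFiniteRing {R m : Type*} [Semiring R]
    [IsStablyFiniteRing R] [Fintype m] [DecidableEq m] {A : Matrix m m R} :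
    Function.Surjective A.vecMul ↔ IsUnit A := by
  rw [vecMul_surjective_iff_exists_left_inverse, isUnit_iff_exists_inv']

end Matrix

theorem quotDim_eq_zero_iff {k R : Type*} [Field k] [Ring R] (ι : k →+* R) {n : ℕ}
    (A : Matrix (Fin n) (Fin n) R) : quotDim k ι A = 0 ↔ Function.Surjective A.vecMul := by
  let : Module k ((Fin n → R) ⧸ Submodule.span R (Set.range fun i => A i)) :=
    Module.compHom _ ι
  rw [quotDim, Cardinal.toENat_eq_zero, rank_zero_iff, Submodule.Quotient.subsingleton_iff,
    show Submodule.span R (Set.range fun i => A i) = LinearMap.range A.vecMulLinear from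
      (range_vecMulLinear A).symm, LinearMap.range_eq_top]
  rfl

namespace IsSkewPolynomialRing

variable {k R : Type*} [Field k] [Ring R] {α : k →+* k} {δ : k → k} {ι : k →+* R} {x : R}
  (h : IsSkewPolynomialRing k R α δ ι x)
include h

theorem delta_zero : δ 0 = 0 := by
  simpa using (h.delta_add 0 0).symm

noncomputable def coeff : R ≃+ (ℕ →₀ k) :=
  (AddEquiv.ofBijective (Finsupp.liftAddHom fun i => (AddMonoidHom.mulRight (x ^ i)).comp
    ι.toAddMonoidHom) h.repr_bijective).symm

theorem coeff_symm_single (i : ℕ) (a : k) : h.coeff.symm (Finsupp.single i a) = ι a * x ^ i :=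
  Finsupp.liftAddHom_apply_single _ i a

theorem coeff_ι_mul (a : k) (r : R) : h.coeff (ι a * r) = a • h.coeff r := by
  obtain ⟨p, rfl⟩ := h.coeff.symm.surjective r
  rw [AddEquiv.apply_symm_apply]
  induction p using Finsupp.induction_linear with
  | zero => simp
  | add p q hp hq => rw [map_add h.coeff.symm, mul_add, map_add h.coeff, hp, hq, smul_add]
  | single i b =>
    rw [coeff_symm_single, ← mul_assoc, ← map_mul, ← coeff_symm_single h,
      AddEquiv.apply_symm_apply, Finsupp.smul_single, smul_eq_mul]

theorem coeff_x_mul_succ (r : R) (j : ℕ) :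
    h.coeff (x * r) (j + 1) = α (h.coeff r j) + δ (h.coeff r (j + 1)) := by
  obtain ⟨p, rfl⟩ := h.coeff.symm.surjective r
  rw [AddEquiv.apply_symm_apply]
  induction p using Finsupp.induction_linear with
  | zero => simp [h.delta_zero]
  | add p q hp hq =>
    rw [map_add h.coeff.symm, mul_add, map_add h.coeff, Finsupp.add_apply, hp, hq,
      Finsupp.add_apply, Finsupp.add_apply, map_add α, h.delta_add]
    abel
  | single i b =>
    have hx : x * h.coeff.symm (Finsupp.single i b) =
        h.coeff.symm (Finsupp.single (i + 1) (α b) + Finsupp.single i (δ b)) := by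
      rw [map_add, coeff_symm_single, coeff_symm_single, coeff_symm_single, ← mul_assoc,
        h.commute_x, add_mul, mul_assoc, pow_succ']
    rw [hx, AddEquiv.apply_symm_apply, Finsupp.add_apply]
    simp only [Finsupp.single_apply]
    split_ifs <;> simp_all [h.delta_zero]

theorem skewDeg_eq_max' {r : R} (hr : (h.coeff r).support.Nonempty) :
    skewDeg h r = (h.coeff r).support.max' hr := by
  rw [← WithBot.unbotD_coe 0 ((h.coeff r).support.max' hr), Finset.coe_max']
  rfl

theorem coeff_skewDeg_ne_zero {r : R} (hr : r ≠ 0) : h.coeff r (skewDeg h r) ≠ 0 := by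
  have hs : (h.coeff r).support.Nonempty := by simpa using hr
  exact h.skewDeg_eq_max' hs ▸ Finsupp.mem_support_iff.1 (Finset.max'_mem _ hs)

theorem coeff_eq_zero_of_skewDeg_lt {r : R} {j : ℕ} (hj : skewDeg h r < j) :
    h.coeff r j = 0 := by
  by_contra hne
  have hj' : j ∈ (h.coeff r).support := Finsupp.mem_support_iff.2 hne
  exact (h.skewDeg_eq_max' ⟨j, hj'⟩ ▸ hj).not_ge (Finset.le_max' _ _ hj')

theorem coeff_x_pow_mul {r : R} {m : ℕ} (hr : ∀ j, m < j → h.coeff r j = 0) (s : ℕ) :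
    (∀ j, m + s < j → h.coeff (x ^ s * r) j = 0) ∧
      h.coeff (x ^ s * r) (m + s) = α^[s] (h.coeff r m) := by
  induction s with
  | zero => simpa using hr
  | succ s ih =>
    obtain ⟨hvan, hlead⟩ := ih
    rw [pow_succ', mul_assoc]
    refine ⟨fun j hj => ?_, ?_⟩
    · obtain ⟨j, rfl⟩ : ∃ j', j = j' + 1 := ⟨j - 1, by omega⟩
      rw [h.coeff_x_mul_succ, hvan j (by omega), hvan (j + 1) (by omega), map_zero,
        h.delta_zero, add_zero]
    · rw [← add_assoc, h.coeff_x_mul_succ, hlead, hvan _ (by omega), h.delta_zero, add_zero,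
        Function.iterate_succ_apply']

theorem exists_coeff_sub_mul_eq_zero {g : R} (hg : g ≠ 0) (f : R) :
    ∃ q, ∀ j, skewDeg h g ≤ j → h.coeff (f - q * g) j = 0 := by
  set d := skewDeg h g
  suffices ∀ N f, (∀ j, N ≤ j → h.coeff f j = 0) →
      ∃ q, ∀ j, d ≤ j → h.coeff (f - q * g) j = 0 from
    this _ f fun j hj => h.coeff_eq_zero_of_skewDeg_lt hj
  intro N
  induction N with
  | zero => exact fun f hf => ⟨0, fun j _ => by simpa using hf j j.zero_le⟩
  | succ m ih =>
    intro f hf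
    rcases lt_or_ge m d with hmd | hdm
    · exact ⟨0, fun j hj => by simpa using hf j (by omega)⟩
    obtain ⟨s, rfl⟩ := Nat.exists_eq_add_of_le hdm
    obtain ⟨hvan, hlead⟩ := h.coeff_x_pow_mul (fun j hj => h.coeff_eq_zero_of_skewDeg_lt hj) s
    have hL : α^[s] (h.coeff g d) ≠ 0 := by
      rw [← iterate_map_zero α s]
      exact (α.injective.iterate s).ne (h.coeff_skewDeg_ne_zero hg)
    set c := h.coeff f (d + s) * (α^[s] (h.coeff g d))⁻¹
    obtain ⟨q, hq⟩ := ih (f - ι c * (x ^ s * g)) fun j hj => by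
      rw [map_sub, h.coeff_ι_mul, Finsupp.sub_apply, Finsupp.smul_apply, smul_eq_mul]
      rcases hj.eq_or_lt with rfl | hlt
      · rw [hlead, mul_assoc, inv_mul_cancel₀ hL, mul_one, sub_self]
      · rw [hf j hlt, hvan j hlt, mul_zero, sub_zero]
    refine ⟨q + ι c * x ^ s, fun j hj => ?_⟩
    rw [show f - (q + ι c * x ^ s) * g = f - ι c * (x ^ s * g) - q * g by noncomm_ring]
    exact hq j hj

theorem isPrincipalIdealRing : IsPrincipalIdealRing R := by
  refine ⟨fun I => ?_⟩
  rcases eq_or_ne I ⊥ with rfl | hI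
  · exact bot_isPrincipal
  obtain ⟨f₀, hf₀I, hf₀⟩ := Submodule.exists_mem_ne_zero_of_ne_bot hI
  obtain ⟨g, ⟨hgI, hg⟩, hmin⟩ := (InvImage.wf (skewDeg h) wellFounded_lt).has_min
    {g | g ∈ I ∧ g ≠ 0} ⟨f₀, hf₀I, hf₀⟩
  refine ⟨⟨g, le_antisymm (fun f hf => ?_) (Submodule.span_singleton_le_iff_mem _ _ |>.2 hgI)⟩⟩
  obtain ⟨q, hq⟩ := h.exists_coeff_sub_mul_eq_zero hg f
  have hrem : f - q * g = 0 := by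
    by_contra hne
    refine hmin _ ⟨I.sub_mem hf (I.smul_mem q hgI), hne⟩ (lt_of_not_ge fun hle => ?_)
    exact h.coeff_skewDeg_ne_zero hne (hq _ hle)
  exact Submodule.mem_span_singleton.2 ⟨q, (sub_eq_zero.1 hrem).symm⟩

end IsSkewPolynomialRing

/-- `dim_k (Rⁿ / Rⁿ A) = 0` if and only if `A` is invertible in
`M(n,R)`; i.e. the kernel of the monoid homomorphism `f : (M(n,R), ·) → (ℕ ∪ {∞}, +)`
is exactly `GL(n,R)`. -/
theorem statement2 {k R : Type*} [Field k] [Ring R]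
    (α : k →+* k) (δ : k → k) (ι : k →+* R) (x : R)
    (h : IsSkewPolynomialRing k R α δ ι x)
    {n : ℕ} (A : Matrix (Fin n) (Fin n) R) :
    quotDim k ι A = 0 ↔ IsUnit A := by
  have := h.isPrincipalIdealRing
  rw [quotDim_eq_zero_iff, Matrix.vecMul_surjective_iff_isUnit_of_isStablyFiniteRing]
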